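/- arXiv:2006.14844 — 8 statements merged into one kernel-verified Lean document; each statement's English description precedes it below -/
import Mathlib

section
/- Let m > 0 and let U be smooth on an open cone of ℝⁿ invariant under positive dilations, positively homogeneous of degree −2 (U(s q) = s^{−2} U(q) for all s > 0). Let q : I → ℝⁿ be a solution of m q̈ = −∇U(q) and let E = (1/2) m |q̇(t)|² + U(q(t)) denote its (constant) energy. Then the function t ↦ m q̇(t) · q(t) − 2 t E is constant on I. -/
open scoped RealInnerProductSpace ContDiff

/-! Differentiating `m ⟪q̇, q⟫` along the flow gives `m ‖q̇‖² - ⟪∇U(q), q⟫`. By Euler's identity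
for a function homogeneous of degree `-2`, `⟪∇U(x), x⟫ = -2 U(x)`, so this derivative equals
`m ‖q̇‖² + 2 U(q) = 2E`. Hence `m ⟪q̇, q⟫ - 2 t E` has zero derivative on the interval. -/

section Euler

variable {E : Type*} [NormedAddCommGroup E] [NormedSpace ℝ E]

theorem fderiv_apply_self_of_homogeneous {U : E → ℝ} {x : E} {k : ℤ}
    (hU : DifferentiableAt ℝ U x) (hhom : ∀ᶠ s in nhds (1 : ℝ), U (s • x) = s ^ k * U x) :
    fderiv ℝ U x x = k * U x := by
  have hray : HasDerivAt (fun s : ℝ => U (s • x)) (fderiv ℝ U x x) 1 := by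
    have hUx : HasFDerivAt U (fderiv ℝ U x) ((1 : ℝ) • x) := by
      simpa using hU.hasFDerivAt
    have hcomp := hUx.comp_hasDerivAt (1 : ℝ) ((hasDerivAt_id (1 : ℝ)).smul_const x)
    rwa [one_smul] at hcomp
  have hpow : HasDerivAt (fun s : ℝ => s ^ k * U x) (k * U x) 1 := by
    simpa using (hasDerivAt_zpow k (1 : ℝ) (Or.inl one_ne_zero)).mul_const (U x)
  exact (hray.congr_of_eventuallyEq (hhom.mono fun _ h => h.symm)).unique hpow

theorem inner_gradient_self_of_homogeneous {F : Type*} [NormedAddCommGroup F]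
    [InnerProductSpace ℝ F] [CompleteSpace F] {U : F → ℝ} {x : F} {k : ℤ}
    (hU : DifferentiableAt ℝ U x) (hhom : ∀ᶠ s in nhds (1 : ℝ), U (s • x) = s ^ k * U x) :
    ⟪gradient U x, x⟫ = k * U x := by
  rw [gradient, InnerProductSpace.toDual_symm_apply]
  exact fderiv_apply_self_of_homogeneous hU hhom

end Euler

theorem hasDerivAt_virial {F : Type*} [NormedAddCommGroup F] [InnerProductSpace ℝ F]
    [CompleteSpace F] {U : F → ℝ} {m t : ℝ} {q q' q'' : ℝ → F}
    (hq : HasDerivAt q (q' t) t) (hq' : HasDerivAt q' (q'' t) t)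
    (hNewton : m • q'' t = -gradient U (q t)) :
    HasDerivAt (fun s => m * ⟪q' s, q s⟫) (m * ‖q' t‖ ^ 2 - ⟪gradient U (q t), q t⟫) t := by
  refine ((hq'.inner ℝ hq).const_mul m).congr_deriv ?_
  rw [mul_add, ← real_inner_smul_left (q'' t), hNewton, inner_neg_left, real_inner_self_eq_norm_sq]
  ring

theorem stmt4_general (n : ℕ) (m : ℝ)
    (Ω : Set (EuclideanSpace ℝ (Fin n))) (hΩ : IsOpen Ω)
    (U : EuclideanSpace ℝ (Fin n) → ℝ)
    (hU : ContDiffOn ℝ ∞ U Ω)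
    (hhom : ∀ x ∈ Ω, ∀ s : ℝ, 0 < s → U (s • x) = (s ^ 2)⁻¹ * U x)
    (a b : ℝ) -- the open interval I = (a, b)
    (q q' q'' : ℝ → EuclideanSpace ℝ (Fin n))
    (hmem : ∀ t ∈ Set.Ioo a b, q t ∈ Ω)
    (hq : ∀ t ∈ Set.Ioo a b, HasDerivAt q (q' t) t)
    (hq' : ∀ t ∈ Set.Ioo a b, HasDerivAt q' (q'' t) t)
    (heq : ∀ t ∈ Set.Ioo a b, m • q'' t = - gradient U (q t))
    (E : ℝ)
    (hE : ∀ t ∈ Set.Ioo a b, (1 / 2) * m * ‖q' t‖ ^ 2 + U (q t) = E) :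
    ∀ t₁ ∈ Set.Ioo a b, ∀ t₂ ∈ Set.Ioo a b,
      m * ⟪q' t₁, q t₁⟫ - 2 * t₁ * E = m * ⟪q' t₂, q t₂⟫ - 2 * t₂ * E := by
  have euler : ∀ x ∈ Ω, ⟪gradient U x, x⟫ = -2 * U x := fun x hx => by
    have hdiff : DifferentiableAt ℝ U x :=
      (hU.differentiableOn (by simp)).differentiableAt (hΩ.mem_nhds hx)
    have hhom_zpow : ∀ᶠ s in nhds (1 : ℝ), U (s • x) = s ^ (-2 : ℤ) * U x :=
      Filter.eventually_of_mem (Ioi_mem_nhds one_pos) fun s hs => by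
        simpa using hhom x hx s hs
    simpa using inner_gradient_self_of_homogeneous hdiff hhom_zpow
  have hderiv : ∀ t ∈ Set.Ioo a b,
      HasDerivAt (fun s => m * ⟪q' s, q s⟫ - 2 * s * E) 0 t := fun t ht => by
    have hlin : HasDerivAt (fun s : ℝ => 2 * s * E) (2 * E) t := by
      simpa using ((hasDerivAt_id t).const_mul (2 : ℝ)).mul_const E
    refine ((hasDerivAt_virial (hq t ht) (hq' t ht) (heq t ht)).sub hlin).congr_deriv ?_
    rw [euler (q t) (hmem t ht), ← hE t ht]
    ring
  intro t₁ ht₁ t₂ ht₂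
  exact isOpen_Ioo.is_const_of_deriv_eq_zero isPreconnected_Ioo
    (fun t ht => (hderiv t ht).differentiableAt.differentiableWithinAt)
    (fun t ht => (hderiv t ht).deriv) ht₁ ht₂

/-- if `U` is smooth on an open cone of `ℝⁿ`, positively homogeneous of
degree `−2`, and `q : I → ℝⁿ` solves `m q̈ = −∇U(q)` with constant energy
`E = (1/2) m |q̇|² + U(q)`, then `t ↦ m q̇(t)·q(t) − 2 t E` is constant on `I`. -/
theorem stmt4 (n : ℕ) (m : ℝ) (hm : 0 < m)
    (Ω : Set (EuclideanSpace ℝ (Fin n))) (hΩ : IsOpen Ω)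
    (hcone : ∀ x ∈ Ω, ∀ s : ℝ, 0 < s → s • x ∈ Ω)
    (U : EuclideanSpace ℝ (Fin n) → ℝ)
    (hU : ContDiffOn ℝ ∞ U Ω)
    (hhom : ∀ x ∈ Ω, ∀ s : ℝ, 0 < s → U (s • x) = (s ^ 2)⁻¹ * U x)
    (a b : ℝ) -- the open interval I = (a, b)
    (q q' q'' : ℝ → EuclideanSpace ℝ (Fin n))
    (hmem : ∀ t ∈ Set.Ioo a b, q t ∈ Ω)
    (hq : ∀ t ∈ Set.Ioo a b, HasDerivAt q (q' t) t)
    (hq' : ∀ t ∈ Set.Ioo a b, HasDerivAt q' (q'' t) t)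
    (heq : ∀ t ∈ Set.Ioo a b, m • q'' t = - gradient U (q t))
    (E : ℝ)
    (hE : ∀ t ∈ Set.Ioo a b, (1 / 2) * m * ‖q' t‖ ^ 2 + U (q t) = E) :
    ∀ t₁ ∈ Set.Ioo a b, ∀ t₂ ∈ Set.Ioo a b,
      m * ⟪q' t₁, q t₁⟫ - 2 * t₁ * E = m * ⟪q' t₂, q t₂⟫ - 2 * t₂ * E :=
  stmt4_general n m Ω hΩ U hU hhom a b q q' q'' hmem hq hq' heq E hE
end

section
/- Let m, k > 0 and let U : ℝⁿ → ℝ be smooth with U(q) ≥ 0 for all q. If q : I → ℝⁿ solves m q̈ = −k q̇ − ∇U(q) on an interval I and t₀ ∈ I, then for all t ∈ I with t ≤ t₀ one has m e^{2kt/m} |q̇(t)|² ≤ e^{2kt₀/m} ( m |q̇(t₀)|² + 2 U(q(t₀)) ); in particular, on any bounded subinterval (t₁, t₀] ⊆ I the velocity q̇(t) is bounded. -/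
open scoped ContDiff
open scoped RealInnerProductSpace

/-!
Along a solution of `m q̈ = -k q̇ - ∇U(q)` the doubled energy `m |q̇|² + 2 U(q)` has derivative
`-2k |q̇|²`. Multiplying it by the integrating factor `e^{2kt/m}` turns this dissipation into the
derivative `e^{2kt/m} · 4k U(q) / m ≥ 0`, so the weighted energy is nondecreasing on `I`; the
bound on `q̇(t)` for `t ≤ t₀` follows by dropping `2 U(q(t)) ≥ 0`, and on `(t₁, t₀]` the weight
is at least `e^{2kt₁/m}`.
-/

open Real

variable {F : Type*} [NormedAddCommGroup F] [InnerProductSpace ℝ F] [CompleteSpace F]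

theorem HasGradientAt.comp_hasDerivAt {U : F → ℝ} {g : F} {γ : ℝ → F} {v : F} {t : ℝ}
    (hU : HasGradientAt U g (γ t)) (hγ : HasDerivAt γ v t) :
    HasDerivAt (fun s => U (γ s)) ⟪g, v⟫ t := by
  have := hU.hasFDerivAt.comp_hasDerivAt t hγ
  rwa [InnerProductSpace.toDual_apply_apply] at this

section DampedGradientSystem

variable {m k : ℝ} {U : F → ℝ} {q q' q'' : ℝ → F}

theorem hasDerivAt_energy_of_damped {t : ℝ} (hU : DifferentiableAt ℝ U (q t))
    (hq : HasDerivAt q (q' t) t) (hq' : HasDerivAt q' (q'' t) t)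
    (heq : m • q'' t = -(k • q' t) - gradient U (q t)) :
    HasDerivAt (fun s => m * ‖q' s‖ ^ 2 + 2 * U (q s)) (-(2 * k * ‖q' t‖ ^ 2)) t := by
  have hdissipation : m * (2 * ⟪q' t, q'' t⟫) + 2 * ⟪gradient U (q t), q' t⟫
      = -(2 * k * ‖q' t‖ ^ 2) := by
    have := congrArg (⟪q' t, ·⟫) heq
    simp only [inner_smul_right, inner_sub_right, inner_neg_right, real_inner_self_eq_norm_sq,
      real_inner_comm (gradient U (q t))] at this ⊢
    linarith
  rw [← hdissipation]
  exact (hq'.norm_sq.const_mul m).add ((hU.hasGradientAt.comp_hasDerivAt hq).const_mul 2)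

theorem hasDerivAt_exp_mul_energy_of_damped {t : ℝ} (hm : m ≠ 0)
    (hU : DifferentiableAt ℝ U (q t))
    (hq : HasDerivAt q (q' t) t) (hq' : HasDerivAt q' (q'' t) t)
    (heq : m • q'' t = -(k • q' t) - gradient U (q t)) :
    HasDerivAt (fun s => exp (2 * k * s / m) * (m * ‖q' s‖ ^ 2 + 2 * U (q s)))
      (exp (2 * k * t / m) * (4 * k * U (q t) / m)) t := by
  have hweight : HasDerivAt (fun s => exp (2 * k * s / m)) (exp (2 * k * t / m) * (2 * k / m)) t :=
    by simpa [mul_comm] using (((hasDerivAt_id t).const_mul (2 * k)).div_const m).exp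
  refine (hweight.mul (hasDerivAt_energy_of_damped hU hq hq' heq)).congr_deriv ?_
  field_simp
  ring

theorem monotoneOn_exp_mul_energy_of_damped {I : Set ℝ} (hI : I.OrdConnected)
    (hm : 0 < m) (hk : 0 ≤ k) (hU : Differentiable ℝ U) (hUnonneg : ∀ x, 0 ≤ U x)
    (hq : ∀ t ∈ I, HasDerivAt q (q' t) t) (hq' : ∀ t ∈ I, HasDerivAt q' (q'' t) t)
    (heq : ∀ t ∈ I, m • q'' t = -(k • q' t) - gradient U (q t)) :
    MonotoneOn (fun s => exp (2 * k * s / m) * (m * ‖q' s‖ ^ 2 + 2 * U (q s))) I := by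
  have hderiv t (ht : t ∈ I) :=
    hasDerivAt_exp_mul_energy_of_damped hm.ne' (hU _) (hq t ht) (hq' t ht) (heq t ht)
  refine monotoneOn_of_hasDerivWithinAt_nonneg hI.convex
    (fun t ht => (hderiv t ht).continuousAt.continuousWithinAt)
    (fun t ht => (hderiv t (interior_subset ht)).hasDerivWithinAt) fun t _ => ?_
  have := hUnonneg (q t)
  positivity

end DampedGradientSystem

/-- for the viscous-resistance equation `m q̈ = −k q̇ − ∇U(q)` with
smooth `U ≥ 0`, every solution satisfies, for `t ≤ t₀`,
`m e^{2kt/m}|q̇(t)|² ≤ e^{2kt₀/m}(m|q̇(t₀)|² + 2U(q(t₀)))`; in particular on every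
bounded subinterval `(t₁, t₀]` of `I` the velocity is bounded. -/
theorem stmt8 (n : ℕ) (m k : ℝ) (hm : 0 < m) (hk : 0 < k)
    (U : EuclideanSpace ℝ (Fin n) → ℝ) (hU : ContDiff ℝ ∞ U)
    (hUpos : ∀ x, 0 ≤ U x)
    (I : Set ℝ) (hI : I.OrdConnected)
    (q q' q'' : ℝ → EuclideanSpace ℝ (Fin n))
    (hq : ∀ t ∈ I, HasDerivAt q (q' t) t)
    (hq' : ∀ t ∈ I, HasDerivAt q' (q'' t) t)
    (heq : ∀ t ∈ I, m • q'' t = -(k • q' t) - gradient U (q t))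
    (t₀ : ℝ) (ht₀ : t₀ ∈ I) :
    (∀ t ∈ I, t ≤ t₀ →
      m * Real.exp (2 * k * t / m) * ‖q' t‖ ^ 2
        ≤ Real.exp (2 * k * t₀ / m) * (m * ‖q' t₀‖ ^ 2 + 2 * U (q t₀))) ∧
    (∀ t₁ : ℝ, ∃ C : ℝ, ∀ t ∈ I ∩ Set.Ioc t₁ t₀, ‖q' t‖ ≤ C) := by
  have hmono := monotoneOn_exp_mul_energy_of_damped hI hm hk.le (hU.differentiable (by simp))
    hUpos hq hq' heq
  have bound : ∀ t ∈ I, t ≤ t₀ → m * exp (2 * k * t / m) * ‖q' t‖ ^ 2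
      ≤ exp (2 * k * t₀ / m) * (m * ‖q' t₀‖ ^ 2 + 2 * U (q t₀)) := fun t ht htt₀ => by
    have := hUpos (q t)
    have := hmono ht ht₀ htt₀
    simp only at this
    nlinarith [exp_pos (2 * k * t / m)]
  refine ⟨bound, fun t₁ => ⟨√(exp (2 * k * t₀ / m) * (m * ‖q' t₀‖ ^ 2 + 2 * U (q t₀)) /
    (m * exp (2 * k * t₁ / m))), fun t ⟨ht, ht₁t, htt₀⟩ => ?_⟩⟩
  have hweight : m * exp (2 * k * t₁ / m) ≤ m * exp (2 * k * t / m) := by gcongr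
  rw [← abs_norm]
  refine abs_le_sqrt ((le_div_iff₀ (by positivity)).2 ?_)
  nlinarith [bound t ht htt₀, sq_nonneg ‖q' t‖]
end

section
/- Let m, k > 0 and let U : ℝⁿ → ℝ be smooth with 0 ≤ U(q) ≤ U_sup < +∞ for all q ∈ ℝⁿ. Then every solution of m q̈ = −k |q̇| q̇ − ∇U(q) whose initial kinetic energy exceeds U_sup explodes in the past in finite time; equivalently, there is no C² function q : (−∞, t₀] → ℝⁿ satisfying m q̈(t) = −k |q̇(t)| q̇(t) − ∇U(q(t)) for all t ≤ t₀ together with (m/2) |q̇(t₀)|² > U_sup. -/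
/-!
Along a solution the mechanical energy `E = (m/2)|q̇|² + U(q)` satisfies `E' = -k|q̇|³ ≤ 0`, so going
back in time `E` only grows and `g = E - U_sup` stays above `g(t₀) > 0`. Since `U ≤ U_sup`, the
kinetic energy dominates `g`, whence `g' ≤ -k (2g/m)^{3/2}`. This superlinear rate makes `g` blow up
at a finite time in the past, i.e. `(√g)⁻¹` reaches `0`.
-/

open scoped ContDiff

open Set

theorem exists_neg_of_le_hasDerivAt_Iic {φ φ' : ℝ → ℝ} {c t₀ : ℝ} (hc : 0 < c)
    (hφ : ∀ t ≤ t₀, HasDerivAt φ (φ' t) t) (hφ' : ∀ t ≤ t₀, c ≤ φ' t) :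
    ∃ t ≤ t₀, φ t < 0 := by
  set t := t₀ - (|φ t₀| + 1) / c
  have hlen : t₀ - t = (|φ t₀| + 1) / c := by ring
  have ht : t < t₀ := by
    have : 0 < (|φ t₀| + 1) / c := by positivity
    linarith
  obtain ⟨ξ, hξ, hslope⟩ := exists_hasDerivAt_eq_slope φ φ' ht
    (fun s hs => (hφ s hs.2).continuousAt.continuousWithinAt)
    (fun s hs => hφ s hs.2.le)
  have hgrowth : c * (t₀ - t) ≤ φ t₀ - φ t := by
    rw [← le_div_iff₀ (sub_pos.2 ht), ← hslope]
    exact hφ' ξ hξ.2.le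
  refine ⟨t, ht.le, ?_⟩
  rw [hlen, mul_div_cancel₀ _ hc.ne'] at hgrowth
  linarith [le_abs_self (φ t₀)]

/-- Otherwise `(√g)⁻¹` would have derivative at least `c / 2` on `(-∞, t₀]` while staying
positive. -/
theorem exists_nonpos_of_hasDerivAt_le_neg_mul_sqrt {g g' : ℝ → ℝ} {c t₀ : ℝ} (hc : 0 < c)
    (hg : ∀ t ≤ t₀, HasDerivAt g (g' t) t) (hg' : ∀ t ≤ t₀, g' t ≤ -(c * g t * √(g t))) :
    ∃ t ≤ t₀, g t ≤ 0 := by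
  by_contra! hpos
  have hφ : ∀ t ≤ t₀, HasDerivAt (fun s => (√(g s))⁻¹) (-g' t / (2 * g t * √(g t))) t := by
    intro t ht
    have hsqrt := Real.sqrt_pos.2 (hpos t ht)
    refine (((hg t ht).sqrt (hpos t ht).ne').inv hsqrt.ne').congr_deriv ?_
    rw [Real.sq_sqrt (hpos t ht).le]
    field_simp
  obtain ⟨t, ht, hneg⟩ := exists_neg_of_le_hasDerivAt_Iic (half_pos hc) hφ fun t ht => by
    have hden : 0 < 2 * g t * √(g t) := by
      have := hpos t ht
      positivity
    rw [le_div_iff₀ hden]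
    linarith [hg' t ht]
  exact (inv_pos.2 (Real.sqrt_pos.2 (hpos t ht))).not_gt hneg

section Energy

variable {F : Type*} [NormedAddCommGroup F]

noncomputable def mechanicalEnergy (m : ℝ) (U : F → ℝ) (q v : ℝ → F) (t : ℝ) : ℝ :=
  m / 2 * ‖v t‖ ^ 2 + U (q t)

theorem hasDerivAt_mechanicalEnergy [InnerProductSpace ℝ F] [CompleteSpace F] {m k t : ℝ}
    {U : F → ℝ} {q q' q'' : ℝ → F} (hU : DifferentiableAt ℝ U (q t)) (hq : HasDerivAt q (q' t) t)
    (hq' : HasDerivAt q' (q'' t) t)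
    (heq : m • q'' t = -((k * ‖q' t‖) • q' t) - gradient U (q t)) :
    HasDerivAt (mechanicalEnergy m U q q') (-(k * ‖q' t‖ ^ 3)) t := by
  have hUq : HasDerivAt (fun s => U (q s)) (inner ℝ (gradient U (q t)) (q' t)) t := by
    simpa [Function.comp_def] using hU.hasGradientAt.hasFDerivAt.comp_hasDerivAt t hq
  refine ((hq'.norm_sq.const_mul (m / 2)).add hUq).congr_deriv ?_
  have hpower := congrArg (fun w => inner ℝ w (q' t)) heq
  simp only [inner_sub_left, inner_neg_left, real_inner_smul_left,
    real_inner_self_eq_norm_sq, real_inner_comm (q' t) (q'' t)] at hpower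
  linear_combination hpower

theorem mechanicalEnergy_le_of_le (m : ℝ) {U : F → ℝ} {Usup : ℝ} (hUsup : ∀ x, U x ≤ Usup)
    (q v : ℝ → F) (t : ℝ) :
    mechanicalEnergy m U q v t - Usup ≤ m / 2 * ‖v t‖ ^ 2 := by
  unfold mechanicalEnergy
  linarith [hUsup (q t)]

end Energy

theorem mul_sqrt_le_pow_three_of_le_sq {a b : ℝ} (ha : 0 ≤ a) (hab : b ≤ a ^ 2) :
    b * √b ≤ a ^ 3 := by
  rcases le_or_gt b 0 with hb | hb
  · rw [Real.sqrt_eq_zero_of_nonpos hb, mul_zero]; positivity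
  · have : √b ≤ a := Real.sqrt_le_iff.2 ⟨ha, hab⟩
    calc b * √b ≤ a ^ 2 * a := mul_le_mul hab this (Real.sqrt_nonneg _) (sq_nonneg _)
      _ = a ^ 3 := by ring

/-- for the hydraulic-resistance equation `m q̈ = −k|q̇|q̇ − ∇U(q)` with
smooth `U` satisfying `0 ≤ U ≤ U_sup < +∞`, every solution whose kinetic energy at some
time `t₀` exceeds `U_sup` explodes in the past in finite time: there is no C² solution
defined on all of `(−∞, t₀]` with `(m/2)|q̇(t₀)|² > U_sup`. -/
theorem stmt12 (n : ℕ) (m k Usup : ℝ) (hm : 0 < m) (hk : 0 < k)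
    (U : EuclideanSpace ℝ (Fin n) → ℝ) (hU : ContDiff ℝ ∞ U)
    (hUpos : ∀ x, 0 ≤ U x) (hUsup : ∀ x, U x ≤ Usup) :
    ∀ t₀ : ℝ,
      ¬ ∃ q q' q'' : ℝ → EuclideanSpace ℝ (Fin n),
        (∀ t ≤ t₀,
          HasDerivAt q (q' t) t ∧
          HasDerivAt q' (q'' t) t ∧
          m • q'' t = -((k * ‖q' t‖) • q' t) - gradient U (q t)) ∧
        (m / 2) * ‖q' t₀‖ ^ 2 > Usup := by
  rintro t₀ ⟨q, q', q'', hsol, hkin₀⟩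
  set E := mechanicalEnergy m U q q'
  have hE : ∀ t ≤ t₀, HasDerivAt E (-(k * ‖q' t‖ ^ 3)) t := fun t ht =>
    hasDerivAt_mechanicalEnergy (hU.differentiable (by simp)).differentiableAt
      (hsol t ht).1 (hsol t ht).2.1 (hsol t ht).2.2
  have hanti : AntitoneOn E (Iic t₀) :=
    antitoneOn_of_hasDerivWithinAt_nonpos (convex_Iic t₀)
      (fun t ht => (hE t ht).continuousAt.continuousWithinAt)
      (fun t ht => (hE t (interior_subset (s := Iic t₀) ht)).hasDerivWithinAt)
      fun t _ => neg_nonpos.2 (by positivity)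
  obtain ⟨t, ht, hEt⟩ := exists_nonpos_of_hasDerivAt_le_neg_mul_sqrt
    (c := k * (2 / m) * √(2 / m)) (by positivity) (fun t ht => (hE t ht).sub_const Usup)
    fun t _ => by
      have hsq : 2 / m * (E t - Usup) ≤ ‖q' t‖ ^ 2 := by
        rw [div_mul_eq_mul_div, div_le_iff₀ hm]
        linarith [mechanicalEnergy_le_of_le m hUsup q q' t]
      have := mul_sqrt_le_pow_three_of_le_sq (norm_nonneg _) hsq
      rw [Real.sqrt_mul (by positivity)] at this
      nlinarith
  have hE₀ : Usup < E t₀ := by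
    simp only [E, mechanicalEnergy]
    linarith [hUpos (q t₀)]
  linarith [hanti ht self_mem_Iic ht]
end

section
/- Let g > 0 and let (q₁,q₂,q₃) : I → ℝ³ be a solution of the conservative Maxwell–Bloch system q̈₁ = g² q₁ q̇₃, q̈₂ = g² q₂ q̇₃, q̈₃ = −( q₁ q̇₁ + q₂ q̇₂ ). Let E = (1/2)( q̇₁² + q̇₂² + g² q̇₃² ) and B = q̇₃ + (1/2)( q₁² + q₂² ) be the (constant) values of its first integrals. Then z(t) := q̇₃(t) is three times differentiable and satisfies the second-order equation z̈(t) + 2 B g² z(t) + 2E − 3 g² z(t)² = 0 on I. -/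
/-! Differentiating `q̈₃ = -(q₁ q̇₁ + q₂ q̇₂)` once more gives
`-(q̇₁² + q̇₂²) - g² q̇₃ (q₁² + q₂²)`; the first integrals replace `q̇₁² + q̇₂²` by `2E - g² q̇₃²`
and `q₁² + q₂²` by `2(B - q̇₃)`, leaving a quadratic polynomial in `z = q̇₃`. A third derivative
then exists by the chain rule. -/

/-- The right-hand side of the reduced equation `z̈ = reducedField g B E z` for `z = q̇₃`. -/
def reducedField (g B E z : ℝ) : ℝ := 3 * g ^ 2 * z ^ 2 - 2 * B * g ^ 2 * z - 2 * E

theorem HasDerivAt.reducedField_comp {z : ℝ → ℝ} {z' t : ℝ} (g B E : ℝ) (h : HasDerivAt z z' t) :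
    HasDerivAt (fun s => reducedField g B E (z s)) ((6 * g ^ 2 * z t - 2 * B * g ^ 2) * z') t := by
  have h' :=
    (((h.fun_pow 2).const_mul (3 * g ^ 2)).sub (h.const_mul (2 * B * g ^ 2))).sub_const (2 * E)
  exact h'.congr_deriv (by norm_num; ring)

theorem neg_deriv_eq_reducedField {g B E x₁ x₂ v₁ v₂ a₁ a₂ z : ℝ}
    (ha₁ : a₁ = g ^ 2 * x₁ * z) (ha₂ : a₂ = g ^ 2 * x₂ * z)
    (hE : 1 / 2 * (v₁ ^ 2 + v₂ ^ 2 + g ^ 2 * z ^ 2) = E)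
    (hB : z + 1 / 2 * (x₁ ^ 2 + x₂ ^ 2) = B) :
    -(v₁ * v₁ + x₁ * a₁ + (v₂ * v₂ + x₂ * a₂)) = reducedField g B E z := by
  unfold reducedField
  linear_combination (-x₁) * ha₁ + (-x₂) * ha₂ - 2 * hE - 2 * g ^ 2 * z * hB

theorem hasDerivWithinAt_reducedField {g B E t : ℝ} {I : Set ℝ}
    {q₁ q₂ q₁' q₂' q₁'' q₂'' q₃' q₃'' : ℝ → ℝ} (ht : t ∈ I)
    (hq₁ : HasDerivAt q₁ (q₁' t) t) (hq₂ : HasDerivAt q₂ (q₂' t) t)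
    (hq₁' : HasDerivAt q₁' (q₁'' t) t) (hq₂' : HasDerivAt q₂' (q₂'' t) t)
    (heq₁ : q₁'' t = g ^ 2 * q₁ t * q₃' t) (heq₂ : q₂'' t = g ^ 2 * q₂ t * q₃' t)
    (heq₃ : ∀ s ∈ I, q₃'' s = -(q₁ s * q₁' s + q₂ s * q₂' s))
    (hE : 1 / 2 * (q₁' t ^ 2 + q₂' t ^ 2 + g ^ 2 * q₃' t ^ 2) = E)
    (hB : q₃' t + 1 / 2 * (q₁ t ^ 2 + q₂ t ^ 2) = B) :
    HasDerivWithinAt q₃'' (reducedField g B E (q₃' t)) I t := by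
  have h := ((hq₁.mul hq₁').add (hq₂.mul hq₂')).neg
  rw [neg_deriv_eq_reducedField heq₁ heq₂ hE hB] at h
  exact h.hasDerivWithinAt.congr_of_mem heq₃ ht

theorem stmt15_general (g : ℝ)
    (I : Set ℝ)
    (q₁ q₂ q₁' q₂' q₃' q₁'' q₂'' q₃'' : ℝ → ℝ)
    (hq₁ : ∀ t ∈ I, HasDerivAt q₁ (q₁' t) t)
    (hq₂ : ∀ t ∈ I, HasDerivAt q₂ (q₂' t) t)
    (hq₁' : ∀ t ∈ I, HasDerivAt q₁' (q₁'' t) t)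
    (hq₂' : ∀ t ∈ I, HasDerivAt q₂' (q₂'' t) t)
    (hq₃' : ∀ t ∈ I, HasDerivAt q₃' (q₃'' t) t)
    (heq₁ : ∀ t ∈ I, q₁'' t = g ^ 2 * q₁ t * q₃' t)
    (heq₂ : ∀ t ∈ I, q₂'' t = g ^ 2 * q₂ t * q₃' t)
    (heq₃ : ∀ t ∈ I, q₃'' t = -(q₁ t * q₁' t + q₂ t * q₂' t))
    (E B : ℝ)
    (hE : ∀ t ∈ I, (1 / 2) * (q₁' t ^ 2 + q₂' t ^ 2 + g ^ 2 * q₃' t ^ 2) = E)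
    (hB : ∀ t ∈ I, q₃' t + (1 / 2) * (q₁ t ^ 2 + q₂ t ^ 2) = B) :
    ∃ z' z'' z''' : ℝ → ℝ,
      (∀ t ∈ I,
        HasDerivWithinAt q₃' (z' t) I t ∧
        HasDerivWithinAt z' (z'' t) I t ∧
        HasDerivWithinAt z'' (z''' t) I t) ∧
      (∀ t ∈ I, z'' t + 2 * B * g ^ 2 * q₃' t + 2 * E - 3 * g ^ 2 * q₃' t ^ 2 = 0) := by
  refine ⟨q₃'', fun t => reducedField g B E (q₃' t),
    fun t => (6 * g ^ 2 * q₃' t - 2 * B * g ^ 2) * q₃'' t, fun t ht => ⟨?_, ?_, ?_⟩,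
    fun t _ => by unfold reducedField; ring⟩
  · exact (hq₃' t ht).hasDerivWithinAt
  · exact hasDerivWithinAt_reducedField ht (hq₁ t ht) (hq₂ t ht) (hq₁' t ht) (hq₂' t ht)
      (heq₁ t ht) (heq₂ t ht) heq₃ (hE t ht) (hB t ht)
  · exact ((hq₃' t ht).reducedField_comp g B E).hasDerivWithinAt

/-- along any solution of the conservative Maxwell–Bloch system with
first-integral values `E` and `B`, the function `z := q̇₃` is three times differentiable
(on `I`) and satisfies `z̈ + 2Bg²z + 2E − 3g²z² = 0` on `I`. -/
theorem stmt15 (g : ℝ) (hg : 0 < g)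
    (I : Set ℝ) (hI : I.OrdConnected)
    (q₁ q₂ q₃ q₁' q₂' q₃' q₁'' q₂'' q₃'' : ℝ → ℝ)
    (hq₁ : ∀ t ∈ I, HasDerivAt q₁ (q₁' t) t)
    (hq₂ : ∀ t ∈ I, HasDerivAt q₂ (q₂' t) t)
    (hq₃ : ∀ t ∈ I, HasDerivAt q₃ (q₃' t) t)
    (hq₁' : ∀ t ∈ I, HasDerivAt q₁' (q₁'' t) t)
    (hq₂' : ∀ t ∈ I, HasDerivAt q₂' (q₂'' t) t)
    (hq₃' : ∀ t ∈ I, HasDerivAt q₃' (q₃'' t) t)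
    (heq₁ : ∀ t ∈ I, q₁'' t = g ^ 2 * q₁ t * q₃' t)
    (heq₂ : ∀ t ∈ I, q₂'' t = g ^ 2 * q₂ t * q₃' t)
    (heq₃ : ∀ t ∈ I, q₃'' t = -(q₁ t * q₁' t + q₂ t * q₂' t))
    (E B : ℝ)
    (hE : ∀ t ∈ I, (1 / 2) * (q₁' t ^ 2 + q₂' t ^ 2 + g ^ 2 * q₃' t ^ 2) = E)
    (hB : ∀ t ∈ I, q₃' t + (1 / 2) * (q₁ t ^ 2 + q₂ t ^ 2) = B) :
    ∃ z' z'' z''' : ℝ → ℝ,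
      (∀ t ∈ I,
        HasDerivWithinAt q₃' (z' t) I t ∧
        HasDerivWithinAt z' (z'' t) I t ∧
        HasDerivWithinAt z'' (z''' t) I t) ∧
      (∀ t ∈ I, z'' t + 2 * B * g ^ 2 * q₃' t + 2 * E - 3 * g ^ 2 * q₃' t ^ 2 = 0) :=
  stmt15_general g I q₁ q₂ q₁' q₂' q₃' q₁'' q₂'' q₃'' hq₁ hq₂ hq₁' hq₂' hq₃' heq₁ heq₂ heq₃ E B hE
    hB
end

section
/- Let g > 0 and let (q₁,q₂,q₃) : I → ℝ³ be a solution of the conservative Maxwell–Bloch system q̈₁ = g² q₁ q̇₃, q̈₂ = g² q₂ q̇₃, q̈₃ = −( q₁ q̇₁ + q₂ q̇₂ ). Let E = (1/2)( q̇₁² + q̇₂² + g² q̇₃² ) and B = q̇₃ + (1/2)( q₁² + q₂² ) be the constant values of its first integrals, and fix t₀ ∈ I. Then the function t ↦ q̈₃(t) + 2 B g² q₃(t) + 2 E t − 3 g² ∫_{t₀}^{t} q̇₃(s)² ds is constant on I. -/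
/-!
Differentiating the third equation and eliminating `q̈₁, q̈₂` with the first two, then
`q₁² + q₂²` with `B` and `q̇₁² + q̇₂²` with `E`, gives the third-order equation
`q⃛₃ = 3g² q̇₃² − 2Bg² q̇₃ − 2E`. Hence `q̈₃ + 2Bg² q₃ + 2Et` is an antiderivative of `3g² q̇₃²`
on `I`, and the fundamental theorem of calculus on the order-connected set `I` concludes.
-/

open Set Filter MeasureTheory

theorem Set.OrdConnected.integral_eq_sub_of_hasDerivWithinAt
    {E : Type*} [NormedAddCommGroup E] [NormedSpace ℝ E] [CompleteSpace E]
    {I : Set ℝ} (hI : I.OrdConnected) {f f' : ℝ → E}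
    (hderiv : ∀ x ∈ I, HasDerivWithinAt f (f' x) I x) {a b : ℝ} (ha : a ∈ I) (hb : b ∈ I)
    (hint : IntervalIntegrable f' volume a b) :
    ∫ y in a..b, f' y = f b - f a := by
  have hsub : uIcc a b ⊆ I := hI.uIcc_subset ha hb
  have hIoo : Ioo (min a b) (max a b) ⊆ I := Ioo_subset_Icc_self.trans hsub
  refine intervalIntegral.integral_eq_sub_of_hasDeriv_right
    (fun x hx => ((hderiv x (hsub hx)).continuousWithinAt).mono hsub) (fun x hx => ?_) hint
  exact ((hderiv x (hIoo hx)).hasDerivAt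
    (mem_of_superset (isOpen_Ioo.mem_nhds hx) hIoo)).hasDerivWithinAt

theorem maxwellBloch_jerk_identity {g x₁ x₂ v₁ v₂ v₃ a₁ a₂ E B : ℝ}
    (h₁ : a₁ = g ^ 2 * x₁ * v₃) (h₂ : a₂ = g ^ 2 * x₂ * v₃)
    (hE : (1 / 2) * (v₁ ^ 2 + v₂ ^ 2 + g ^ 2 * v₃ ^ 2) = E)
    (hB : v₃ + (1 / 2) * (x₁ ^ 2 + x₂ ^ 2) = B) :
    -(v₁ * v₁ + x₁ * a₁ + (v₂ * v₂ + x₂ * a₂)) + 2 * B * g ^ 2 * v₃ + 2 * E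
      = 3 * g ^ 2 * v₃ ^ 2 := by
  linear_combination (-2 : ℝ) * hE + (-2 * g ^ 2 * v₃) * hB + (-x₁) * h₁ + (-x₂) * h₂

section MaxwellBloch

variable {g E B : ℝ} {I : Set ℝ} {q₁ q₂ q₃ q₁' q₂' q₃' q₁'' q₂'' q₃'' : ℝ → ℝ}

theorem maxwellBloch_hasDerivWithinAt_q₃'' {t : ℝ} (ht : t ∈ I)
    (hq₁ : HasDerivAt q₁ (q₁' t) t) (hq₂ : HasDerivAt q₂ (q₂' t) t)
    (hq₁' : HasDerivAt q₁' (q₁'' t) t) (hq₂' : HasDerivAt q₂' (q₂'' t) t)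
    (heq₃ : ∀ s ∈ I, q₃'' s = -(q₁ s * q₁' s + q₂ s * q₂' s)) :
    HasDerivWithinAt q₃''
      (-(q₁' t * q₁' t + q₁ t * q₁'' t + (q₂' t * q₂' t + q₂ t * q₂'' t))) I t :=
  ((hq₁.mul hq₁').add (hq₂.mul hq₂')).neg.hasDerivWithinAt.congr heq₃ (heq₃ t ht)

theorem maxwellBloch_continuousOn_q₃'
    (hq₁ : ∀ t ∈ I, HasDerivAt q₁ (q₁' t) t) (hq₂ : ∀ t ∈ I, HasDerivAt q₂ (q₂' t) t)
    (hB : ∀ t ∈ I, q₃' t + (1 / 2) * (q₁ t ^ 2 + q₂ t ^ 2) = B) :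
    ContinuousOn q₃' I := by
  have hcont : ContinuousOn (fun s => B - (1 / 2) * (q₁ s ^ 2 + q₂ s ^ 2)) I := fun t ht =>
    (continuousAt_const.sub ((((hq₁ t ht).continuousAt.pow 2).add
      ((hq₂ t ht).continuousAt.pow 2)).const_mul _)).continuousWithinAt
  exact hcont.congr fun t ht => by linarith [hB t ht]

theorem maxwellBloch_hasDerivWithinAt_antiderivative
    (hq₁ : ∀ t ∈ I, HasDerivAt q₁ (q₁' t) t)
    (hq₂ : ∀ t ∈ I, HasDerivAt q₂ (q₂' t) t)
    (hq₃ : ∀ t ∈ I, HasDerivAt q₃ (q₃' t) t)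
    (hq₁' : ∀ t ∈ I, HasDerivAt q₁' (q₁'' t) t)
    (hq₂' : ∀ t ∈ I, HasDerivAt q₂' (q₂'' t) t)
    (heq₁ : ∀ t ∈ I, q₁'' t = g ^ 2 * q₁ t * q₃' t)
    (heq₂ : ∀ t ∈ I, q₂'' t = g ^ 2 * q₂ t * q₃' t)
    (heq₃ : ∀ t ∈ I, q₃'' t = -(q₁ t * q₁' t + q₂ t * q₂' t))
    (hE : ∀ t ∈ I, (1 / 2) * (q₁' t ^ 2 + q₂' t ^ 2 + g ^ 2 * q₃' t ^ 2) = E)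
    (hB : ∀ t ∈ I, q₃' t + (1 / 2) * (q₁ t ^ 2 + q₂ t ^ 2) = B) :
    ∀ t ∈ I, HasDerivWithinAt (fun s => q₃'' s + 2 * B * g ^ 2 * q₃ s + 2 * E * s)
      (3 * g ^ 2 * q₃' t ^ 2) I t := by
  intro t ht
  have hderiv := ((maxwellBloch_hasDerivWithinAt_q₃'' ht (hq₁ t ht) (hq₂ t ht) (hq₁' t ht)
    (hq₂' t ht) heq₃).add (((hq₃ t ht).const_mul (2 * B * g ^ 2)).hasDerivWithinAt)).add
    (((hasDerivAt_id t).const_mul (2 * E)).hasDerivWithinAt)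
  rw [mul_one, maxwellBloch_jerk_identity (heq₁ t ht) (heq₂ t ht) (hE t ht) (hB t ht)]
    at hderiv
  exact hderiv

end MaxwellBloch

theorem stmt16_general (g : ℝ)
    (I : Set ℝ) (hI : I.OrdConnected)
    (q₁ q₂ q₃ q₁' q₂' q₃' q₁'' q₂'' q₃'' : ℝ → ℝ)
    (hq₁ : ∀ t ∈ I, HasDerivAt q₁ (q₁' t) t)
    (hq₂ : ∀ t ∈ I, HasDerivAt q₂ (q₂' t) t)
    (hq₃ : ∀ t ∈ I, HasDerivAt q₃ (q₃' t) t)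
    (hq₁' : ∀ t ∈ I, HasDerivAt q₁' (q₁'' t) t)
    (hq₂' : ∀ t ∈ I, HasDerivAt q₂' (q₂'' t) t)
    (heq₁ : ∀ t ∈ I, q₁'' t = g ^ 2 * q₁ t * q₃' t)
    (heq₂ : ∀ t ∈ I, q₂'' t = g ^ 2 * q₂ t * q₃' t)
    (heq₃ : ∀ t ∈ I, q₃'' t = -(q₁ t * q₁' t + q₂ t * q₂' t))
    (E B : ℝ)
    (hE : ∀ t ∈ I, (1 / 2) * (q₁' t ^ 2 + q₂' t ^ 2 + g ^ 2 * q₃' t ^ 2) = E)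
    (hB : ∀ t ∈ I, q₃' t + (1 / 2) * (q₁ t ^ 2 + q₂ t ^ 2) = B)
    (t₀ : ℝ) (ht₀ : t₀ ∈ I) :
    ∀ t₁ ∈ I, ∀ t₂ ∈ I,
      (q₃'' t₁ + 2 * B * g ^ 2 * q₃ t₁ + 2 * E * t₁ - 3 * g ^ 2 * ∫ s in t₀..t₁, q₃' s ^ 2)
        = (q₃'' t₂ + 2 * B * g ^ 2 * q₃ t₂ + 2 * E * t₂
            - 3 * g ^ 2 * ∫ s in t₀..t₂, q₃' s ^ 2) := by
  have hderiv := maxwellBloch_hasDerivWithinAt_antiderivative hq₁ hq₂ hq₃ hq₁' hq₂'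
    heq₁ heq₂ heq₃ hE hB
  have hcont : ContinuousOn (fun s => 3 * g ^ 2 * q₃' s ^ 2) I :=
    continuousOn_const.mul ((maxwellBloch_continuousOn_q₃' hq₁ hq₂ hB).pow 2)
  have hFTC : ∀ t ∈ I, 3 * g ^ 2 * ∫ s in t₀..t, q₃' s ^ 2
      = (q₃'' t + 2 * B * g ^ 2 * q₃ t + 2 * E * t)
        - (q₃'' t₀ + 2 * B * g ^ 2 * q₃ t₀ + 2 * E * t₀) := fun t ht => by
    rw [← intervalIntegral.integral_const_mul]
    exact hI.integral_eq_sub_of_hasDerivWithinAt hderiv ht₀ ht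
      ((hcont.mono (hI.uIcc_subset ht₀ ht)).intervalIntegrable)
  intro t₁ ht₁ t₂ ht₂
  rw [hFTC t₁ ht₁, hFTC t₂ ht₂]
  ring

/-- along any solution of the conservative Maxwell–Bloch system with
first-integral values `E` and `B`, the nonlocal quantity
`q̈₃(t) + 2Bg²q₃(t) + 2Et − 3g² ∫_{t₀}^{t} q̇₃(s)² ds` is constant on `I`. -/
theorem stmt16 (g : ℝ) (hg : 0 < g)
    (I : Set ℝ) (hI : I.OrdConnected)
    (q₁ q₂ q₃ q₁' q₂' q₃' q₁'' q₂'' q₃'' : ℝ → ℝ)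
    (hq₁ : ∀ t ∈ I, HasDerivAt q₁ (q₁' t) t)
    (hq₂ : ∀ t ∈ I, HasDerivAt q₂ (q₂' t) t)
    (hq₃ : ∀ t ∈ I, HasDerivAt q₃ (q₃' t) t)
    (hq₁' : ∀ t ∈ I, HasDerivAt q₁' (q₁'' t) t)
    (hq₂' : ∀ t ∈ I, HasDerivAt q₂' (q₂'' t) t)
    (hq₃' : ∀ t ∈ I, HasDerivAt q₃' (q₃'' t) t)
    (heq₁ : ∀ t ∈ I, q₁'' t = g ^ 2 * q₁ t * q₃' t)
    (heq₂ : ∀ t ∈ I, q₂'' t = g ^ 2 * q₂ t * q₃' t)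
    (heq₃ : ∀ t ∈ I, q₃'' t = -(q₁ t * q₁' t + q₂ t * q₂' t))
    (E B : ℝ)
    (hE : ∀ t ∈ I, (1 / 2) * (q₁' t ^ 2 + q₂' t ^ 2 + g ^ 2 * q₃' t ^ 2) = E)
    (hB : ∀ t ∈ I, q₃' t + (1 / 2) * (q₁ t ^ 2 + q₂ t ^ 2) = B)
    (t₀ : ℝ) (ht₀ : t₀ ∈ I) :
    ∀ t₁ ∈ I, ∀ t₂ ∈ I,
      (q₃'' t₁ + 2 * B * g ^ 2 * q₃ t₁ + 2 * E * t₁ - 3 * g ^ 2 * ∫ s in t₀..t₁, q₃' s ^ 2)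
        = (q₃'' t₂ + 2 * B * g ^ 2 * q₃ t₂ + 2 * E * t₂
            - 3 * g ^ 2 * ∫ s in t₀..t₂, q₃' s ^ 2) :=
  stmt16_general g I hI q₁ q₂ q₃ q₁' q₂' q₃' q₁'' q₂'' q₃'' hq₁ hq₂ hq₃ hq₁' hq₂' heq₁ heq₂ heq₃ E B
    hE hB t₀ ht₀
end

section
/- Let a, b, c ≥ 0, g > 0, k ∈ ℝ, and let (q₁,q₂,q₃) : I → ℝ³ be a solution of the dissipative Maxwell–Bloch system q̈₁ = −a b q₁ − (a+b) q̇₁ + g² q₁ q̇₃, q̈₂ = −a b q₂ − (a+b) q̇₂ + g² q₂ q̇₃, q̈₃ = −a ( q₁² + q₂² ) − c ( q̇₃ − k ) − ( q₁ q̇₁ + q₂ q̇₂ ). Then, for any fixed t₀ ∈ I, the function t ↦ g² e^{ct} ( q₁(t)² + q₂(t)² + 2 q̇₃(t) − 2k ) + (2a − c) g² ∫_{t₀}^{t} e^{cs} ( q₁(s)² + q₂(s)² ) ds is constant on I. -/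
/-! Write `W = q₁² + q₂² + 2q̇₃ − 2k`. The third equation says exactly that
`Ẇ = −c W + (c − 2a)(q₁² + q₂²)`, so the integrating factor `e^{ct}` gives
`(e^{ct} W)˙ = (c − 2a) e^{ct}(q₁² + q₂²)`; integrating over subintervals of `I` yields the claim. -/

open Real

theorem hasDerivAt_exp_mul_of_hasDerivAt_sub {W : ℝ → ℝ} {c h t : ℝ}
    (hW : HasDerivAt W (h - c * W t) t) :
    HasDerivAt (fun s => exp (c * s) * W s) (exp (c * t) * h) t := by
  have hexp : HasDerivAt (fun s => exp (c * s)) (exp (c * t) * c) t := by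
    simpa using ((hasDerivAt_id t).const_mul c).exp
  exact (hexp.mul hW).congr_deriv (by ring)

theorem Set.OrdConnected.add_integral_eq_of_hasDerivAt_neg {E : Type*} [NormedAddCommGroup E]
    [NormedSpace ℝ E] [CompleteSpace E] {I : Set ℝ} (hI : I.OrdConnected) {G f : ℝ → E}
    (hG : ∀ t ∈ I, HasDerivAt G (-f t) t) (hf : ContinuousOn f I) {t₀ t₁ t₂ : ℝ}
    (ht₀ : t₀ ∈ I) (ht₁ : t₁ ∈ I) (ht₂ : t₂ ∈ I) :
    G t₁ + ∫ s in t₀..t₁, f s = G t₂ + ∫ s in t₀..t₂, f s := by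
  have hint : ∀ u ∈ I, ∀ v ∈ I, IntervalIntegrable f MeasureTheory.volume u v :=
    fun u hu v hv => (hf.mono (hI.uIcc_subset hu hv)).intervalIntegrable
  have hftc : ∫ s in t₁..t₂, -f s = G t₂ - G t₁ :=
    intervalIntegral.integral_eq_sub_of_hasDerivAt
      (fun s hs => hG s (hI.uIcc_subset ht₁ ht₂ hs)) (hint t₁ ht₁ t₂ ht₂).neg
  rw [intervalIntegral.integral_neg, neg_eq_iff_eq_neg, neg_sub] at hftc
  rw [← intervalIntegral.integral_add_adjacent_intervals (hint t₀ ht₀ t₁ ht₁)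
    (hint t₁ ht₁ t₂ ht₂), hftc]
  abel

theorem hasDerivAt_sq_add_sq_add_two_mul_sub_of_maxwellBloch
    {x y z x' y' z' : ℝ → ℝ} {a c k t : ℝ}
    (hx : HasDerivAt x (x' t) t) (hy : HasDerivAt y (y' t) t) (hz : HasDerivAt z (z' t) t)
    (hz' : z' t = -a * (x t ^ 2 + y t ^ 2) - c * (z t - k) - (x t * x' t + y t * y' t)) :
    HasDerivAt (fun s => x s ^ 2 + y s ^ 2 + 2 * z s - 2 * k)
      ((c - 2 * a) * (x t ^ 2 + y t ^ 2) - c * (x t ^ 2 + y t ^ 2 + 2 * z t - 2 * k)) t :=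
  ((((hx.pow 2).add (hy.pow 2)).add (hz.const_mul 2)).sub_const _).congr_deriv
    (by rw [hz']; ring)

theorem stmt17_general (a c g k : ℝ)
    (I : Set ℝ) (hI : I.OrdConnected)
    (q₁ q₂ q₁' q₂' q₃' q₃'' : ℝ → ℝ)
    (hq₁ : ∀ t ∈ I, HasDerivAt q₁ (q₁' t) t)
    (hq₂ : ∀ t ∈ I, HasDerivAt q₂ (q₂' t) t)
    (hq₃' : ∀ t ∈ I, HasDerivAt q₃' (q₃'' t) t)
    (heq₃ : ∀ t ∈ I, q₃'' t = -a * (q₁ t ^ 2 + q₂ t ^ 2) - c * (q₃' t - k)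
      - (q₁ t * q₁' t + q₂ t * q₂' t))
    (t₀ : ℝ) (ht₀ : t₀ ∈ I) :
    ∀ t₁ ∈ I, ∀ t₂ ∈ I,
      (g ^ 2 * Real.exp (c * t₁) * (q₁ t₁ ^ 2 + q₂ t₁ ^ 2 + 2 * q₃' t₁ - 2 * k)
        + (2 * a - c) * g ^ 2 * ∫ s in t₀..t₁, Real.exp (c * s) * (q₁ s ^ 2 + q₂ s ^ 2))
      = (g ^ 2 * Real.exp (c * t₂) * (q₁ t₂ ^ 2 + q₂ t₂ ^ 2 + 2 * q₃' t₂ - 2 * k)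
        + (2 * a - c) * g ^ 2 * ∫ s in t₀..t₂, Real.exp (c * s) * (q₁ s ^ 2 + q₂ s ^ 2)) := by
  intro t₁ ht₁ t₂ ht₂
  have hderiv : ∀ t ∈ I, HasDerivAt
      (fun s => g ^ 2 * Real.exp (c * s) * (q₁ s ^ 2 + q₂ s ^ 2 + 2 * q₃' s - 2 * k))
      (-((2 * a - c) * g ^ 2 * (Real.exp (c * t) * (q₁ t ^ 2 + q₂ t ^ 2)))) t := fun t ht =>
    ((hasDerivAt_exp_mul_of_hasDerivAt_sub (hasDerivAt_sq_add_sq_add_two_mul_sub_of_maxwellBloch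
      (hq₁ t ht) (hq₂ t ht) (hq₃' t ht) (heq₃ t ht))).const_mul (g ^ 2)).congr_deriv
      (by ring) |>.congr_of_eventuallyEq (.of_forall fun s => by ring)
  have hcont : ContinuousOn (fun s => Real.exp (c * s) * (q₁ s ^ 2 + q₂ s ^ 2)) I := fun t ht =>
    ((continuous_const.mul continuous_id).rexp.continuousAt.mul
      (((hq₁ t ht).continuousAt.pow 2).add ((hq₂ t ht).continuousAt.pow 2))).continuousWithinAt
  simp only [← intervalIntegral.integral_const_mul]
  exact hI.add_integral_eq_of_hasDerivAt_neg hderiv (continuousOn_const.mul hcont) ht₀ ht₁ ht₂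

/-- along any solution of the dissipative Maxwell–Bloch system, the
nonlocal quantity
`g² e^{ct}(q₁² + q₂² + 2q̇₃ − 2k) + (2a − c) g² ∫_{t₀}^{t} e^{cs}(q₁(s)² + q₂(s)²) ds`
is constant on `I`. -/
theorem stmt17 (a b c g k : ℝ) (ha : 0 ≤ a) (hb : 0 ≤ b) (hc : 0 ≤ c) (hg : 0 < g)
    (I : Set ℝ) (hI : I.OrdConnected)
    (q₁ q₂ q₃ q₁' q₂' q₃' q₁'' q₂'' q₃'' : ℝ → ℝ)
    (hq₁ : ∀ t ∈ I, HasDerivAt q₁ (q₁' t) t)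
    (hq₂ : ∀ t ∈ I, HasDerivAt q₂ (q₂' t) t)
    (hq₃ : ∀ t ∈ I, HasDerivAt q₃ (q₃' t) t)
    (hq₁' : ∀ t ∈ I, HasDerivAt q₁' (q₁'' t) t)
    (hq₂' : ∀ t ∈ I, HasDerivAt q₂' (q₂'' t) t)
    (hq₃' : ∀ t ∈ I, HasDerivAt q₃' (q₃'' t) t)
    (heq₁ : ∀ t ∈ I, q₁'' t = -(a * b) * q₁ t - (a + b) * q₁' t + g ^ 2 * q₁ t * q₃' t)
    (heq₂ : ∀ t ∈ I, q₂'' t = -(a * b) * q₂ t - (a + b) * q₂' t + g ^ 2 * q₂ t * q₃' t)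
    (heq₃ : ∀ t ∈ I, q₃'' t = -a * (q₁ t ^ 2 + q₂ t ^ 2) - c * (q₃' t - k)
      - (q₁ t * q₁' t + q₂ t * q₂' t))
    (t₀ : ℝ) (ht₀ : t₀ ∈ I) :
    ∀ t₁ ∈ I, ∀ t₂ ∈ I,
      (g ^ 2 * Real.exp (c * t₁) * (q₁ t₁ ^ 2 + q₂ t₁ ^ 2 + 2 * q₃' t₁ - 2 * k)
        + (2 * a - c) * g ^ 2 * ∫ s in t₀..t₁, Real.exp (c * s) * (q₁ s ^ 2 + q₂ s ^ 2))
      = (g ^ 2 * Real.exp (c * t₂) * (q₁ t₂ ^ 2 + q₂ t₂ ^ 2 + 2 * q₃' t₂ - 2 * k)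
        + (2 * a - c) * g ^ 2 * ∫ s in t₀..t₂, Real.exp (c * s) * (q₁ s ^ 2 + q₂ s ^ 2)) :=
  stmt17_general a c g k I hI q₁ q₂ q₁' q₂' q₃' q₃'' hq₁ hq₂ hq₃' heq₃ t₀ ht₀
end

section
/- Let a, b ≥ 0, g > 0, k ∈ ℝ, and set c = 2a. If (q₁,q₂,q₃) : I → ℝ³ is a solution of the dissipative Maxwell–Bloch system q̈₁ = −a b q₁ − (a+b) q̇₁ + g² q₁ q̇₃, q̈₂ = −a b q₂ − (a+b) q̇₂ + g² q₂ q̇₃, q̈₃ = −a ( q₁² + q₂² ) − 2a ( q̇₃ − k ) − ( q₁ q̇₁ + q₂ q̇₂ ), then M(t) = e^{2at} ( q₁(t)² + q₂(t)² + 2 q̇₃(t) − 2k ) is constant in t on I. -/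
/-! The third equation gives `E = q₁² + q₂² + 2 q̇₃ − 2k` the linear decay law
`Ė = −2a E`, so `e^{2at} E` has zero derivative and is constant on the interval `I`. -/

open Real

theorem Set.OrdConnected.eq_of_hasDerivAt_eq_zero {E : Type*} [NormedAddCommGroup E]
    [NormedSpace ℝ E] {I : Set ℝ} (hI : I.OrdConnected) {f : ℝ → E}
    (hf : ∀ t ∈ I, HasDerivAt f 0 t) {x y : ℝ} (hx : x ∈ I) (hy : y ∈ I) : f x = f y := by
  have hle := hI.convex.norm_image_sub_le_of_norm_hasDerivWithin_le
    (fun t ht => (hf t ht).hasDerivWithinAt) (fun _ _ => norm_zero.le) hx hy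
  rw [zero_mul, norm_le_zero_iff, sub_eq_zero] at hle
  exact hle.symm

theorem Set.OrdConnected.exp_mul_mul_eq_of_hasDerivAt_eq_neg_mul {I : Set ℝ}
    (hI : I.OrdConnected) {c : ℝ} {E : ℝ → ℝ} (hE : ∀ t ∈ I, HasDerivAt E (-(c * E t)) t)
    {x y : ℝ} (hx : x ∈ I) (hy : y ∈ I) : exp (c * x) * E x = exp (c * y) * E y := by
  refine hI.eq_of_hasDerivAt_eq_zero (f := fun s => exp (c * s) * E s)
    (fun t ht => ?_) hx hy
  have hexp : HasDerivAt (fun s => exp (c * s)) (exp (c * t) * c) t := by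
    simpa only [mul_one, id] using ((hasDerivAt_id t).const_mul c).exp
  refine (hexp.mul (hE t ht)).congr_deriv ?_
  ring

theorem stmt18_general (a k : ℝ)
    (I : Set ℝ) (hI : I.OrdConnected)
    (q₁ q₂ q₁' q₂' q₃' q₃'' : ℝ → ℝ)
    (hq₁ : ∀ t ∈ I, HasDerivAt q₁ (q₁' t) t)
    (hq₂ : ∀ t ∈ I, HasDerivAt q₂ (q₂' t) t)
    (hq₃' : ∀ t ∈ I, HasDerivAt q₃' (q₃'' t) t)
    (heq₃ : ∀ t ∈ I, q₃'' t = -a * (q₁ t ^ 2 + q₂ t ^ 2) - 2 * a * (q₃' t - k)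
      - (q₁ t * q₁' t + q₂ t * q₂' t)) :
    ∀ t₁ ∈ I, ∀ t₂ ∈ I,
      Real.exp (2 * a * t₁) * (q₁ t₁ ^ 2 + q₂ t₁ ^ 2 + 2 * q₃' t₁ - 2 * k)
        = Real.exp (2 * a * t₂) * (q₁ t₂ ^ 2 + q₂ t₂ ^ 2 + 2 * q₃' t₂ - 2 * k) := by
  have hdecay : ∀ t ∈ I, HasDerivAt (fun s => q₁ s ^ 2 + q₂ s ^ 2 + 2 * q₃' s - 2 * k)
      (-(2 * a * (q₁ t ^ 2 + q₂ t ^ 2 + 2 * q₃' t - 2 * k))) t := by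
    intro t ht
    refine ((((hq₁ t ht).pow 2).add ((hq₂ t ht).pow 2)).add
      ((hq₃' t ht).const_mul 2)).sub_const (2 * k) |>.congr_deriv ?_
    rw [heq₃ t ht]
    ring
  exact fun t₁ h₁ t₂ h₂ => hI.exp_mul_mul_eq_of_hasDerivAt_eq_neg_mul hdecay h₁ h₂

/-- along any solution of the dissipative Maxwell–Bloch system with
`c = 2a`, the quantity `M(t) = e^{2at}(q₁² + q₂² + 2q̇₃ − 2k)` is a first integral. -/
theorem stmt18 (a b g k : ℝ) (ha : 0 ≤ a) (hb : 0 ≤ b) (hg : 0 < g)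
    (I : Set ℝ) (hI : I.OrdConnected)
    (q₁ q₂ q₃ q₁' q₂' q₃' q₁'' q₂'' q₃'' : ℝ → ℝ)
    (hq₁ : ∀ t ∈ I, HasDerivAt q₁ (q₁' t) t)
    (hq₂ : ∀ t ∈ I, HasDerivAt q₂ (q₂' t) t)
    (hq₃ : ∀ t ∈ I, HasDerivAt q₃ (q₃' t) t)
    (hq₁' : ∀ t ∈ I, HasDerivAt q₁' (q₁'' t) t)
    (hq₂' : ∀ t ∈ I, HasDerivAt q₂' (q₂'' t) t)
    (hq₃' : ∀ t ∈ I, HasDerivAt q₃' (q₃'' t) t)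
    (heq₁ : ∀ t ∈ I, q₁'' t = -(a * b) * q₁ t - (a + b) * q₁' t + g ^ 2 * q₁ t * q₃' t)
    (heq₂ : ∀ t ∈ I, q₂'' t = -(a * b) * q₂ t - (a + b) * q₂' t + g ^ 2 * q₂ t * q₃' t)
    (heq₃ : ∀ t ∈ I, q₃'' t = -a * (q₁ t ^ 2 + q₂ t ^ 2) - 2 * a * (q₃' t - k)
      - (q₁ t * q₁' t + q₂ t * q₂' t)) :
    ∀ t₁ ∈ I, ∀ t₂ ∈ I,
      Real.exp (2 * a * t₁) * (q₁ t₁ ^ 2 + q₂ t₁ ^ 2 + 2 * q₃' t₁ - 2 * k)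
        = Real.exp (2 * a * t₂) * (q₁ t₂ ^ 2 + q₂ t₂ ^ 2 + 2 * q₃' t₂ - 2 * k) :=
  stmt18_general a k I hI q₁ q₂ q₁' q₂' q₃' q₃'' hq₁ hq₂ hq₃' heq₃
end

section
/- Let a, b, c ≥ 0, g > 0, k ∈ ℝ, and let (q₁,q₂,q₃) : I → ℝ³ be a solution of the dissipative Maxwell–Bloch system q̈₁ = −a b q₁ − (a+b) q̇₁ + g² q₁ q̇₃, q̈₂ = −a b q₂ − (a+b) q̇₂ + g² q₂ q̇₃, q̈₃ = −a ( q₁² + q₂² ) − c ( q̇₃ − k ) − ( q₁ q̇₁ + q₂ q̇₂ ). Then N(t) = e^{(a+b)t} ( q₁(t) q̇₂(t) − q₂(t) q̇₁(t) ) is constant in t on I (in polar coordinates q₁ = r cos θ, q₂ = r sin θ this reads N = e^{(a+b)t} r² θ̇). -/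
/-!
For planar motion `q̈ = f(t) q − γ q̇` under a central force with linear damping, the force term
contributes nothing to the derivative of the angular momentum `L = q₁ q̇₂ − q₂ q̇₁`, so
`L̇ = −γ L` and `e^{γ t} L` has derivative zero. In the Maxwell–Bloch system the first two
equations are of this form with `γ = a + b` and `f = −a b + g² q̇₃`.
-/

open Real

def angularMomentum (x y x' y' : ℝ → ℝ) (t : ℝ) : ℝ := x t * y' t - y t * x' t

section AngularMomentum

variable {x y x' y' x'' y'' : ℝ → ℝ} {t : ℝ}

theorem hasDerivAt_angularMomentum (hx : HasDerivAt x (x' t) t) (hy : HasDerivAt y (y' t) t)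
    (hx' : HasDerivAt x' (x'' t) t) (hy' : HasDerivAt y' (y'' t) t) :
    HasDerivAt (angularMomentum x y x' y') (x t * y'' t - y t * x'' t) t :=
  ((hx.mul hy').sub (hy.mul hx')).congr_deriv (by ring)

theorem hasDerivAt_exp_mul_angularMomentum_eq_zero {γ : ℝ} {f : ℝ → ℝ}
    (hx : HasDerivAt x (x' t) t) (hy : HasDerivAt y (y' t) t)
    (hx' : HasDerivAt x' (x'' t) t) (hy' : HasDerivAt y' (y'' t) t)
    (hx'' : x'' t = f t * x t - γ * x' t) (hy'' : y'' t = f t * y t - γ * y' t) :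
    HasDerivAt (fun s => exp (γ * s) * angularMomentum x y x' y' s) 0 t := by
  have hexp : HasDerivAt (fun s => exp (γ * s)) (exp (γ * t) * γ) t :=
    ((hasDerivAt_id t).const_mul γ).exp.congr_deriv (by simp)
  refine (hexp.mul (hasDerivAt_angularMomentum hx hy hx' hy')).congr_deriv ?_
  rw [hx'', hy'', angularMomentum]
  ring

end AngularMomentum

theorem stmt19_general (a b g : ℝ)
    (I : Set ℝ) (hI : I.OrdConnected)
    (q₁ q₂ q₁' q₂' q₃' q₁'' q₂'' : ℝ → ℝ)
    (hq₁ : ∀ t ∈ I, HasDerivAt q₁ (q₁' t) t)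
    (hq₂ : ∀ t ∈ I, HasDerivAt q₂ (q₂' t) t)
    (hq₁' : ∀ t ∈ I, HasDerivAt q₁' (q₁'' t) t)
    (hq₂' : ∀ t ∈ I, HasDerivAt q₂' (q₂'' t) t)
    (heq₁ : ∀ t ∈ I, q₁'' t = -(a * b) * q₁ t - (a + b) * q₁' t + g ^ 2 * q₁ t * q₃' t)
    (heq₂ : ∀ t ∈ I, q₂'' t = -(a * b) * q₂ t - (a + b) * q₂' t + g ^ 2 * q₂ t * q₃' t) :
    ∀ t₁ ∈ I, ∀ t₂ ∈ I,
      Real.exp ((a + b) * t₁) * (q₁ t₁ * q₂' t₁ - q₂ t₁ * q₁' t₁)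
        = Real.exp ((a + b) * t₂) * (q₁ t₂ * q₂' t₂ - q₂ t₂ * q₁' t₂) := by
  intro t₁ ht₁ t₂ ht₂
  refine hI.eq_of_hasDerivAt_eq_zero
    (f := fun s => exp ((a + b) * s) * angularMomentum q₁ q₂ q₁' q₂' s) (fun t ht => ?_) ht₁ ht₂
  exact hasDerivAt_exp_mul_angularMomentum_eq_zero (f := fun s => g ^ 2 * q₃' s - a * b)
    (hq₁ t ht) (hq₂ t ht) (hq₁' t ht) (hq₂' t ht)
    (by rw [heq₁ t ht]; ring) (by rw [heq₂ t ht]; ring)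

/-- along any solution of the dissipative Maxwell–Bloch system, the
quantity `N(t) = e^{(a+b)t}(q₁ q̇₂ − q₂ q̇₁)` is a first integral (in polar coordinates in
the `(q₁, q₂)` plane it reads `N = e^{(a+b)t} r² θ̇`). -/
theorem stmt19 (a b c g k : ℝ) (ha : 0 ≤ a) (hb : 0 ≤ b) (hc : 0 ≤ c) (hg : 0 < g)
    (I : Set ℝ) (hI : I.OrdConnected)
    (q₁ q₂ q₃ q₁' q₂' q₃' q₁'' q₂'' q₃'' : ℝ → ℝ)
    (hq₁ : ∀ t ∈ I, HasDerivAt q₁ (q₁' t) t)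
    (hq₂ : ∀ t ∈ I, HasDerivAt q₂ (q₂' t) t)
    (hq₃ : ∀ t ∈ I, HasDerivAt q₃ (q₃' t) t)
    (hq₁' : ∀ t ∈ I, HasDerivAt q₁' (q₁'' t) t)
    (hq₂' : ∀ t ∈ I, HasDerivAt q₂' (q₂'' t) t)
    (hq₃' : ∀ t ∈ I, HasDerivAt q₃' (q₃'' t) t)
    (heq₁ : ∀ t ∈ I, q₁'' t = -(a * b) * q₁ t - (a + b) * q₁' t + g ^ 2 * q₁ t * q₃' t)
    (heq₂ : ∀ t ∈ I, q₂'' t = -(a * b) * q₂ t - (a + b) * q₂' t + g ^ 2 * q₂ t * q₃' t)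
    (heq₃ : ∀ t ∈ I, q₃'' t = -a * (q₁ t ^ 2 + q₂ t ^ 2) - c * (q₃' t - k)
      - (q₁ t * q₁' t + q₂ t * q₂' t)) :
    ∀ t₁ ∈ I, ∀ t₂ ∈ I,
      Real.exp ((a + b) * t₁) * (q₁ t₁ * q₂' t₁ - q₂ t₁ * q₁' t₁)
        = Real.exp ((a + b) * t₂) * (q₁ t₂ * q₂' t₂ - q₂ t₂ * q₁' t₂) :=
  stmt19_general a b g I hI q₁ q₂ q₁' q₂' q₃' q₁'' q₂'' hq₁ hq₂ hq₁' hq₂' heq₁ heq₂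
end
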